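/- The operator ρ_w annihilates all nontrivial shuffle products: if u and v are elementary tensors of positive weights p and q with p + q = w, then ρ_w(u ⧢ v) = 0. -/

import Mathlib

/- We model the weight-graded tensor algebra of a `ℚ`-vector space with basis `V`
as the free `ℚ`-module on words `List V`; elementary tensors are single words. -/

/-- Prepend a letter to every word (linear "a ⊗ -"). -/
noncomputable def consL {V : Type*} (a : V) (x : List V →₀ ℚ) : List V →₀ ℚ :=
  Finsupp.mapDomain (fun l => a :: l) x

/-- Append a letter to every word (linear "- ⊗ a"). -/
noncomputable def appR {V : Type*} (a : V) (x : List V →₀ ℚ) : List V →₀ ℚ :=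
  Finsupp.mapDomain (fun l => l ++ [a]) x

/-- The shuffle product of two elementary tensors (words). -/
noncomputable def shuffle {V : Type*} : List V → List V → (List V →₀ ℚ)
  | [], v => Finsupp.single v 1
  | a :: u, [] => Finsupp.single (a :: u) 1
  | a :: u, b :: v => consL a (shuffle u (b :: v)) + consL b (shuffle (a :: u) v)
  termination_by u v => u.length + v.length

/-- The Dynkin-type operator `ρ` on elementary tensors:
`ρ₁ = id` and `ρ_w(a₁⊗…⊗a_w) = ρ_{w-1}(a₁⊗…⊗a_{w-1}) ⊗ a_w − ρ_{w-1}(a₂⊗…⊗a_w) ⊗ a₁`. -/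
noncomputable def rho {V : Type*} : List V → (List V →₀ ℚ)
  | [] => 0
  | [a] => Finsupp.single [a] 1
  | a :: b :: l =>
      appR ((b :: l).getLast (List.cons_ne_nil _ _)) (rho (a :: (b :: l).dropLast))
        - appR a (rho (b :: l))
  termination_by l => l.length
  decreasing_by all_goals simp [List.length_dropLast]

/-- Linear extension of `ρ`. -/
noncomputable def rhoL {V : Type*} (x : List V →₀ ℚ) : List V →₀ ℚ :=
  x.sum fun l c => c • rho l

/-! For a word `w` of weight at least two, `ρ(w) = ρ(w⁻) ⊗ last w − ρ(tail w) ⊗ head w`,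
where `w⁻` is `w` without its last letter (`rhoInit` and `rhoTail` below).
Expanding `u ⧢ v` by last letters in the first term and by first letters in the second gives
`ρ(u ⧢ v) = D(u, v) + D(v, u)` with `D(u, v) = ρ(u⁻ ⧢ v) ⊗ last u − ρ(tail u ⧢ v) ⊗ head u`.
By induction on the weight, both shuffles in `D(u, v)` vanish unless `u` is a single letter,
and then the two terms of `D(u, v)` cancel. -/

section
variable {V : Type*}

lemma consL_add (a : V) (x y : List V →₀ ℚ) : consL a (x + y) = consL a x + consL a y :=
  Finsupp.mapDomain_add

lemma appR_add (a : V) (x y : List V →₀ ℚ) : appR a (x + y) = appR a x + appR a y :=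
  Finsupp.mapDomain_add

lemma appR_zero (a : V) : appR a (0 : List V →₀ ℚ) = 0 :=
  Finsupp.mapDomain_zero

lemma consL_single (a : V) (l : List V) (c : ℚ) :
    consL a (Finsupp.single l c) = Finsupp.single (a :: l) c :=
  Finsupp.mapDomain_single

lemma appR_single (a : V) (l : List V) (c : ℚ) :
    appR a (Finsupp.single l c) = Finsupp.single (l ++ [a]) c :=
  Finsupp.mapDomain_single

lemma consL_appR (a b : V) (x : List V →₀ ℚ) : consL a (appR b x) = appR b (consL a x) := by
  simp only [consL, appR, ← Finsupp.mapDomain_comp]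
  rfl

lemma shuffle_nil_left (v : List V) : shuffle [] v = Finsupp.single v 1 := by
  rw [shuffle]

lemma shuffle_nil_right (u : List V) : shuffle u [] = Finsupp.single u 1 := by
  cases u <;> rw [shuffle]

lemma shuffle_cons_cons (a b : V) (u v : List V) :
    shuffle (a :: u) (b :: v) = consL a (shuffle u (b :: v)) + consL b (shuffle (a :: u) v) := by
  rw [shuffle]

lemma shuffle_comm (u v : List V) : shuffle u v = shuffle v u := by
  induction u, v using shuffle.induct with
  | case1 v => rw [shuffle_nil_left, shuffle_nil_right]
  | case2 a u => rw [shuffle_nil_left, shuffle_nil_right]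
  | case3 a u b v ih₁ ih₂ => rw [shuffle_cons_cons, shuffle_cons_cons, ih₁, ih₂, add_comm]

lemma length_eq_of_mem_support_shuffle (u v : List V) :
    ∀ l ∈ (shuffle u v).support, l.length = u.length + v.length := by
  classical
  induction u, v using shuffle.induct with
  | case1 v => simp [shuffle_nil_left]
  | case2 a u => simp [shuffle_nil_right]
  | case3 a u b v ih₁ ih₂ =>
    intro l hl
    rw [shuffle_cons_cons] at hl
    rcases Finset.mem_union.1 (Finsupp.support_add hl) with hl | hl <;>
      obtain ⟨l', hl', rfl⟩ := Finset.mem_image.1 (Finsupp.mapDomain_support hl)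
    · simp [ih₁ l' hl']
      omega
    · simp [ih₂ l' hl']
      omega

lemma shuffle_append_singleton (u v : List V) (x y : V) :
    shuffle (u ++ [x]) (v ++ [y]) =
      appR x (shuffle u (v ++ [y])) + appR y (shuffle (u ++ [x]) v) := by
  induction u generalizing v with
  | nil =>
    induction v with
    | nil =>
      simp only [List.nil_append, shuffle_cons_cons, shuffle_nil_left, shuffle_nil_right,
        consL_single, appR_single, List.singleton_append]
      exact add_comm _ _
    | cons b v ih =>
      simp only [List.nil_append, List.cons_append] at ih ⊢
      rw [shuffle_cons_cons, ih, shuffle_cons_cons x b [] v]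
      simp only [shuffle_nil_left, consL_add, appR_add, consL_appR, consL_single, appR_single,
        List.cons_append, List.append_assoc]
      abel
  | cons a u ih =>
    induction v with
    | nil =>
      have h := ih []
      simp only [List.nil_append] at h ⊢
      rw [List.cons_append, shuffle_cons_cons, h, shuffle_cons_cons a y u []]
      simp only [shuffle_nil_right, consL_add, appR_add, consL_appR, consL_single, appR_single,
        List.cons_append, List.append_assoc]
      abel
    | cons b v ihv =>
      have h := ih (b :: v)
      simp only [List.cons_append] at h ihv ⊢
      rw [shuffle_cons_cons, h, ihv, shuffle_cons_cons a b u, shuffle_cons_cons a b (u ++ [x])]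
      simp only [consL_add, appR_add, consL_appR]
      abel

noncomputable def rhoInit : List V → (List V →₀ ℚ)
  | [] => 0
  | a :: l => appR ((a :: l).getLast (List.cons_ne_nil _ _)) (rho (a :: l).dropLast)

noncomputable def rhoTail : List V → (List V →₀ ℚ)
  | [] => 0
  | a :: l => appR a (rho l)

lemma rho_eq_rhoInit_sub_rhoTail (a b : V) (l : List V) :
    rho (a :: b :: l) = rhoInit (a :: b :: l) - rhoTail (a :: b :: l) := by
  rw [rho]
  rfl

lemma rhoInit_append_singleton (l : List V) (a : V) : rhoInit (l ++ [a]) = appR a (rho l) := by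
  cases l with
  | nil => simp [rhoInit, rho, appR_zero]
  | cons b l =>
    show appR ((b :: (l ++ [a])).getLast (List.cons_ne_nil _ _))
      (rho (b :: (l ++ [a])).dropLast) = _
    simp only [← List.cons_append, List.getLast_append_singleton, List.dropLast_concat]

lemma appR_eq_lmapDomain (a : V) : appR a = Finsupp.lmapDomain ℚ ℚ (· ++ [a]) := rfl

lemma rhoL_eq_linearCombination (x : List V →₀ ℚ) :
    rhoL x = Finsupp.linearCombination ℚ rho x :=
  (Finsupp.linearCombination_apply ℚ x).symm

lemma linearCombination_rhoInit_appR (a : V) (x : List V →₀ ℚ) :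
    Finsupp.linearCombination ℚ rhoInit (appR a x) = appR a (rhoL x) := by
  rw [appR, Finsupp.linearCombination_mapDomain, rhoL_eq_linearCombination, appR_eq_lmapDomain,
    Finsupp.apply_linearCombination]
  congr 2
  exact funext fun l => rhoInit_append_singleton l a

lemma linearCombination_rhoTail_consL (a : V) (x : List V →₀ ℚ) :
    Finsupp.linearCombination ℚ rhoTail (consL a x) = appR a (rhoL x) := by
  rw [consL, Finsupp.linearCombination_mapDomain, rhoL_eq_linearCombination, appR_eq_lmapDomain,
    Finsupp.apply_linearCombination]
  rfl

lemma rhoL_eq_sub_of_two_le_length {x : List V →₀ ℚ}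
    (hx : ∀ l ∈ x.support, 2 ≤ l.length) :
    rhoL x = Finsupp.linearCombination ℚ rhoInit x - Finsupp.linearCombination ℚ rhoTail x := by
  simp only [rhoL, Finsupp.linearCombination_apply, Finsupp.sum, ← Finset.sum_sub_distrib,
    ← smul_sub]
  refine Finset.sum_congr rfl fun l hl => ?_
  obtain ⟨a, b, l, rfl⟩ : ∃ a b l', l = a :: b :: l' := by
    match l, hx l hl with
    | a :: b :: l', _ => exact ⟨a, b, l', rfl⟩
  rw [rho_eq_rhoInit_sub_rhoTail]

lemma rhoL_shuffle {u v : List V} (hu : u ≠ []) (hv : v ≠ []) :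
    rhoL (shuffle u v) =
      (appR (u.getLast hu) (rhoL (shuffle u.dropLast v))
          - appR (u.head hu) (rhoL (shuffle u.tail v)))
        + (appR (v.getLast hv) (rhoL (shuffle v.dropLast u))
          - appR (v.head hv) (rhoL (shuffle v.tail u))) := by
  have hlen : ∀ l ∈ (shuffle u v).support, 2 ≤ l.length := fun l hl => by
    rw [length_eq_of_mem_support_shuffle u v l hl]
    have := List.length_pos_iff.2 hu
    have := List.length_pos_iff.2 hv
    omega
  have hInit : Finsupp.linearCombination ℚ rhoInit (shuffle u v) =
      appR (u.getLast hu) (rhoL (shuffle u.dropLast v))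
        + appR (v.getLast hv) (rhoL (shuffle u v.dropLast)) := by
    conv_lhs => rw [← List.dropLast_append_getLast hu, ← List.dropLast_append_getLast hv]
    rw [shuffle_append_singleton, map_add, linearCombination_rhoInit_appR,
      linearCombination_rhoInit_appR, List.dropLast_append_getLast hu,
      List.dropLast_append_getLast hv]
  have hTail : Finsupp.linearCombination ℚ rhoTail (shuffle u v) =
      appR (u.head hu) (rhoL (shuffle u.tail v)) + appR (v.head hv) (rhoL (shuffle u v.tail)) := by
    conv_lhs => rw [← List.cons_head_tail hu, ← List.cons_head_tail hv]
    rw [shuffle_cons_cons, map_add, linearCombination_rhoTail_consL,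
      linearCombination_rhoTail_consL, List.cons_head_tail, List.cons_head_tail]
  rw [rhoL_eq_sub_of_two_le_length hlen, hInit, hTail, shuffle_comm u v.dropLast,
    shuffle_comm u v.tail]
  abel

lemma appR_getLast_sub_appR_head_eq_zero {u : List V} (hu : u ≠ []) (v : List V)
    (hvanish : ∀ w, w ≠ [] → w.length < u.length → rhoL (shuffle w v) = 0) :
    appR (u.getLast hu) (rhoL (shuffle u.dropLast v)) - appR (u.head hu) (rhoL (shuffle u.tail v))
      = 0 := by
  match u, hu with
  | [a], _ => exact sub_self _
  | a :: b :: l, _ =>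
    rw [hvanish _ (by simp) (by simp), hvanish _ (by simp) (by simp), appR_zero, appR_zero,
      sub_self]

end

/-- `ρ_w` annihilates all nontrivial shuffle products: if `u`, `v` are elementary tensors
of positive weights, then `ρ(u ⧢ v) = 0`. -/
theorem stmt_5 (V : Type*) (u v : List V) (hu : u ≠ []) (hv : v ≠ []) :
    rhoL (shuffle u v) = 0 := by
  induction h : u.length + v.length using Nat.strong_induction_on generalizing u v with
  | _ n ih =>
    rw [rhoL_shuffle hu hv,
      appR_getLast_sub_appR_head_eq_zero hu v fun w hw hlt => ih _ (by omega) w v hw hv rfl,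
      appR_getLast_sub_appR_head_eq_zero hv u fun w hw hlt => ih _ (by omega) w u hw hu rfl,
      add_zero]
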